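/- Let 0 < p₀ < ln 2. The unique invariant probability measure of the linear system dB⁰/dt = ∑_n 2^{-n}p₀Bⁿe^{-p₀} - p₀B⁰, dBⁿ/dt = 2^{1-n}p₀B^{n-1}(1-e^{-p₀}) - 2^{-n}p₀Bⁿ (n ≥ 1) is given by Bⁿ_st = (2(1 - e^{-p₀}))ⁿ·B⁰_st with B⁰_st = (1 - 2(1 - e^{-p₀})) = 2e^{-p₀} - 1 > 0, and ∑_n Bⁿ_st = 1. -/

import Mathlib

open Real

/-- `B` is an invariant point of the linear dominating back-off system. -/
def LinearSystemInvariant (p₀ : ℝ) (B : ℕ → ℝ) : Prop :=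
  ((∑' n : ℕ, (2:ℝ)^(-(n:ℤ)) * p₀ * B n) * Real.exp (-p₀) = p₀ * B 0) ∧
  (∀ n : ℕ, 1 ≤ n →
    (2:ℝ)^((1:ℤ) - n) * p₀ * B (n-1) * (1 - Real.exp (-p₀)) = (2:ℝ)^(-(n:ℤ)) * p₀ * B n)

/-!
Writing `e = exp (-p₀)`, the balance equation of level `n ≥ 1` says exactly that
`Bⁿ = 2 (1 - e) Bⁿ⁻¹`, so every invariant point is geometric with ratio `r = 2 (1 - e)`.
The condition `p₀ < log 2` means `e > 1/2`, i.e. `r < 1`, so the geometric profile is summable and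
normalising it pins `B⁰ = 1 - r`. The balance equation of level `0` holds for every geometric
profile of ratio `r`, because `∑ 2⁻ⁿ rⁿ = 1 / (1 - r / 2) = 1 / e`.
-/

noncomputable def backoffRatio (p₀ : ℝ) : ℝ := 2 * (1 - exp (-p₀))

lemma backoffRatio_pos {p₀ : ℝ} (hp₀ : 0 < p₀) : 0 < backoffRatio p₀ := by
  have : exp (-p₀) < 1 := exp_lt_one_iff.mpr (by linarith)
  unfold backoffRatio
  linarith

lemma backoffRatio_lt_one {p₀ : ℝ} (hp₀ : p₀ < log 2) : backoffRatio p₀ < 1 := by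
  have : exp (-log 2) < exp (-p₀) := exp_lt_exp.mpr (by linarith)
  rw [exp_neg, exp_log two_pos] at this
  unfold backoffRatio
  linarith

lemma one_sub_half_backoffRatio (p₀ : ℝ) : 1 - backoffRatio p₀ / 2 = exp (-p₀) := by
  unfold backoffRatio
  ring

lemma eq_pow_mul_of_succ_eq_mul {B : ℕ → ℝ} {r : ℝ} (h : ∀ n, B (n + 1) = r * B n) (n : ℕ) :
    B n = r ^ n * B 0 := by
  induction n with
  | zero => simp
  | succ n ih => rw [h, ih, pow_succ]; ring

lemma two_zpow_flux_balance_iff {p₀ : ℝ} (hp₀ : p₀ ≠ 0) (q x y : ℝ) (n : ℕ) :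
    (2:ℝ) ^ ((1:ℤ) - (n + 1 : ℕ)) * p₀ * x * (1 - q) = (2:ℝ) ^ (-((n + 1 : ℕ) : ℤ)) * p₀ * y ↔
      y = 2 * (1 - q) * x := by
  have h_in : (2:ℝ) ^ ((1:ℤ) - (n + 1 : ℕ)) = 2 * (2:ℝ) ^ (-((n + 1 : ℕ) : ℤ)) := by
    rw [← zpow_one_add₀ two_ne_zero]
    push_cast
    ring_nf
  have h_pos : (0:ℝ) < 2 ^ (-((n + 1 : ℕ) : ℤ)) := zpow_pos two_pos _
  rw [h_in, eq_comm]
  constructor <;> intro h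
  · exact mul_left_cancel₀ (mul_ne_zero h_pos.ne' hp₀) (by linear_combination h)
  · rw [h]; ring

lemma hasSum_pow_mul_iff {r c s : ℝ} (hr₀ : 0 ≤ r) (hr₁ : r < 1) :
    HasSum (fun n => r ^ n * c) s ↔ c = (1 - r) * s := by
  have hgeo := (hasSum_geometric_of_lt_one hr₀ hr₁).mul_right c
  have hr : 1 - r ≠ 0 := sub_ne_zero.mpr hr₁.ne'
  constructor
  · intro h
    rw [h.unique hgeo]
    field_simp
  · rintro rfl
    rwa [← mul_assoc, inv_mul_cancel₀ hr, one_mul] at hgeo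

lemma hasSum_two_zpow_neg_mul_geometric {r : ℝ} (hr₀ : 0 ≤ r) (hr₂ : r < 2) (a c : ℝ) :
    HasSum (fun n : ℕ => (2:ℝ) ^ (-(n:ℤ)) * a * (r ^ n * c)) (a * c / (1 - r / 2)) := by
  have hterm : (fun n : ℕ => (2:ℝ) ^ (-(n:ℤ)) * a * (r ^ n * c)) = fun n => (r / 2) ^ n * (a * c) := by
    ext n
    rw [zpow_neg, zpow_natCast, div_pow]
    field_simp
  rw [hterm, div_eq_inv_mul (a * c)]
  exact (hasSum_geometric_of_lt_one (r := r / 2) (by positivity) (by linarith)).mul_right (a * c)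

lemma linearSystemInvariant_of_eq_pow_mul {p₀ c : ℝ} {B : ℕ → ℝ} (hp₀ : 0 < p₀)
    (hB : ∀ n, B n = backoffRatio p₀ ^ n * c) : LinearSystemInvariant p₀ B := by
  have hr₀ := (backoffRatio_pos hp₀).le
  have hr₂ : backoffRatio p₀ < 2 := by
    have := exp_pos (-p₀)
    unfold backoffRatio
    linarith
  refine ⟨?_, fun n hn => ?_⟩
  · have hsum := hasSum_two_zpow_neg_mul_geometric hr₀ hr₂ p₀ c
    rw [funext hB, hsum.tsum_eq, one_sub_half_backoffRatio, div_mul_cancel₀ _ (exp_pos _).ne']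
    simp
  · obtain ⟨m, rfl⟩ := Nat.exists_eq_add_of_le' hn
    rw [Nat.add_sub_cancel, two_zpow_flux_balance_iff hp₀.ne', hB, hB, pow_succ]
    unfold backoffRatio
    ring

lemma LinearSystemInvariant.eq_pow_mul {p₀ : ℝ} {B : ℕ → ℝ} (h : LinearSystemInvariant p₀ B)
    (hp₀ : p₀ ≠ 0) (n : ℕ) : B n = backoffRatio p₀ ^ n * B 0 :=
  eq_pow_mul_of_succ_eq_mul
    (fun m => (two_zpow_flux_balance_iff hp₀ _ _ _ m).mp (h.2 (m + 1) m.succ_pos)) n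

theorem linear_backoff_system_invariant_measure
    (p₀ : ℝ) (hp₀ : 0 < p₀) (hp₀' : p₀ < Real.log 2)
    (Bst : ℕ → ℝ)
    (hBst : ∀ n, Bst n = (2 * (1 - Real.exp (-p₀)))^n * (2 * Real.exp (-p₀) - 1)) :
    (Bst 0 = 2 * Real.exp (-p₀) - 1 ∧ 0 < Bst 0 ∧
      Bst 0 = 1 - 2 * (1 - Real.exp (-p₀)) ∧
      HasSum Bst 1 ∧ LinearSystemInvariant p₀ Bst) ∧
    ∀ B : ℕ → ℝ, (∀ n, 0 ≤ B n) → HasSum B 1 → LinearSystemInvariant p₀ B → B = Bst := by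
  set r := backoffRatio p₀
  have hr₀ : 0 ≤ r := (backoffRatio_pos hp₀).le
  have hr₁ : r < 1 := backoffRatio_lt_one hp₀'
  have hBst_geom : ∀ n, Bst n = r ^ n * (1 - r) := fun n => by
    rw [hBst]; unfold r backoffRatio; ring
  refine ⟨⟨by rw [hBst]; ring, by rw [hBst_geom]; simpa using hr₁, by rw [hBst]; ring,
    ?_, linearSystemInvariant_of_eq_pow_mul hp₀ hBst_geom⟩, fun B _ hB_sum hB_inv => ?_⟩
  · rw [funext hBst_geom, hasSum_pow_mul_iff hr₀ hr₁, mul_one]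
  · have hB_geom := hB_inv.eq_pow_mul hp₀.ne'
    rw [funext hB_geom, hasSum_pow_mul_iff hr₀ hr₁, mul_one] at hB_sum
    funext n
    rw [hB_geom, hB_sum, hBst_geom]
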